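/- Let D₃ = diag(1, -1, e^{2πi/3}) and v₂ = ((1/2)e^{-iπ/9}, i/2, 1/√2). For all integers s,t, ⟨D₃ˢv₂, D₃ᵗv₂⟩ = 1/4 + (-1)^{t-s}/4 + (1/2)ζ^{t-s} where ζ = e^{2πi/3}; consequently |⟨D₃ˢv₂, D₃ᵗv₂⟩| = 1/2 whenever s ≢ t (mod 6), and the vectors D₃ᵗv₂, t = 0,…,5, are six distinct unit vectors. -/

import Mathlib

open Matrix Complex

noncomputable def ζ : ℂ := Complex.exp (2 * Real.pi * Complex.I / 3)

noncomputable def v₂ : Fin 3 → ℂ :=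
  ![(1 / 2 : ℂ) * Complex.exp (-(Real.pi * Complex.I / 9)),
    Complex.I / 2, ((Real.sqrt 2 : ℂ))⁻¹]

/-! `D₃ᵗ` is the diagonal matrix of the `t`-th powers of the unimodular eigenvalues `1, -1, ζ`, so
`⟨D₃ˢv₂, D₃ᵗv₂⟩ = ∑ᵢ λᵢ^(t-s) |v₂ᵢ|²` with weights `|v₂ᵢ|² = 1/4, 1/4, 1/2`. For `r = t - s` odd
the first two terms cancel, leaving `ζʳ/2`; for `r` even but not divisible by `6` we have `3 ∤ r`,
so `1 + ζʳ = -ζ²ʳ`. Either way the modulus is `1/2`, which separates the six unit vectors. -/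

theorem Matrix.val_zpow_of_val_eq_diagonal {n K : Type*} [Fintype n] [DecidableEq n] [Field K]
    {D : (Matrix n n K)ˣ} {d : n → K} (hD : (D : Matrix n n K) = diagonal d) (t : ℤ) :
    ((D ^ t : (Matrix n n K)ˣ) : Matrix n n K) = diagonal fun i => d i ^ t := by
  obtain ⟨u, rfl⟩ : IsUnit d := isUnit_diagonal.mp (hD ▸ D.isUnit)
  have hDu : D = Units.map (diagonalRingHom n K : (n → K) →* Matrix n n K) u := Units.ext hD
  rw [hDu, ← map_zpow, Units.coe_map, MonoidHom.coe_coe, diagonalRingHom_apply,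
    Units.val_zpow_eq_zpow_val]
  rfl

theorem Complex.star_zpow_mul_zpow_of_norm_eq_one {z : ℂ} (hz : ‖z‖ = 1) (s t : ℤ) :
    star (z ^ s) * z ^ t = z ^ (t - s) := by
  have hz0 : z ≠ 0 := norm_ne_zero_iff.mp (hz ▸ one_ne_zero)
  rw [star_zpow₀, RCLike.star_def, ← Complex.inv_eq_conj hz, _root_.inv_zpow', ← zpow_add₀ hz0,
    neg_add_eq_sub]

theorem Complex.star_diagonal_mulVec_dotProduct_diagonal_mulVec {n : Type*} [Fintype n]
    [DecidableEq n] (a b v : n → ℂ) :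
    star (diagonal a *ᵥ v) ⬝ᵥ (diagonal b *ᵥ v) = ∑ i, star (a i) * b i * (‖v i‖ : ℂ) ^ 2 := by
  simp only [dotProduct, mulVec_diagonal, Pi.star_apply, star_mul', ← Complex.conj_mul',
    RCLike.star_def]
  exact Finset.sum_congr rfl fun i _ => by ring

theorem IsPrimitiveRoot.one_add_zpow_add_zpow_sq {K : Type*} [Field K] {ω : K}
    (hω : IsPrimitiveRoot ω 3) {r : ℤ} (hr : ¬ (3 : ℤ) ∣ r) : 1 + ω ^ r + (ω ^ r) ^ 2 = 0 := by
  have hcube : (ω ^ r) ^ 3 = 1 := by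
    rw [← zpow_natCast, ← _root_.zpow_mul, hω.zpow_eq_one_iff_dvd]
    exact dvd_mul_left _ _
  have hne : ω ^ r ≠ 1 := by rwa [Ne, hω.zpow_eq_one_iff_dvd]
  have : (ω ^ r - 1) * (1 + ω ^ r + (ω ^ r) ^ 2) = 0 := by linear_combination hcube
  exact (mul_eq_zero.mp this).resolve_left (sub_ne_zero.mpr hne)

theorem isPrimitiveRoot_zeta : IsPrimitiveRoot ζ 3 := by
  simpa [ζ] using Complex.isPrimitiveRoot_exp 3 (by norm_num)

theorem norm_zeta : ‖ζ‖ = 1 := isPrimitiveRoot_zeta.norm'_eq_one (by norm_num)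

theorem norm_v₂_sq (i : Fin 3) : (‖v₂ i‖ : ℂ) ^ 2 = ![1 / 4, 1 / 4, 1 / 2] i := by
  fin_cases i <;> norm_num [v₂, Complex.norm_exp, abs_of_nonneg, ← Complex.ofReal_pow]

theorem star_diagonal_zpow_mulVec_v₂_dotProduct (s t : ℤ) :
    star (diagonal (fun i => ![1, -1, ζ] i ^ s) *ᵥ v₂) ⬝ᵥ
        (diagonal (fun i => ![1, -1, ζ] i ^ t) *ᵥ v₂) =
      1 / 4 + (-1 : ℂ) ^ (t - s) / 4 + ζ ^ (t - s) / 2 := by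
  rw [Complex.star_diagonal_mulVec_dotProduct_diagonal_mulVec, Fin.sum_univ_three]
  simp only [norm_v₂_sq, cons_val_zero, cons_val_one, cons_val_two, head_cons, tail_cons,
    Complex.star_zpow_mul_zpow_of_norm_eq_one norm_one,
    Complex.star_zpow_mul_zpow_of_norm_eq_one (by simp : ‖(-1 : ℂ)‖ = 1),
    Complex.star_zpow_mul_zpow_of_norm_eq_one norm_zeta]
  rw [_root_.one_zpow]
  ring

theorem norm_one_fourth_add_neg_one_zpow_add_zeta_zpow {r : ℤ} (hr : ¬ (6 : ℤ) ∣ r) :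
    ‖1 / 4 + (-1 : ℂ) ^ r / 4 + ζ ^ r / 2‖ = 1 / 2 := by
  rcases Int.even_or_odd r with hr₂ | hr₂
  · have hr₃ : ¬ (3 : ℤ) ∣ r := by
      obtain ⟨k, rfl⟩ := hr₂
      omega
    rw [hr₂.neg_one_zpow, show (1 : ℂ) / 4 + 1 / 4 + ζ ^ r / 2 = -((ζ ^ r) ^ 2 / 2) by
      linear_combination (1 / 2 : ℂ) * isPrimitiveRoot_zeta.one_add_zpow_add_zpow_sq hr₃]
    simp [norm_zeta]
  · rw [hr₂.neg_one_zpow, show (1 : ℂ) / 4 + -1 / 4 + ζ ^ r / 2 = ζ ^ r / 2 by ring]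
    simp [norm_zeta]

local notation "M₃" => Matrix (Fin 3) (Fin 3) ℂ

/-- `D` is the (invertible) matrix `D₃ = diag(1, -1, e^{2πi/3})`, packaged as a
unit so that integer powers `D₃ᵗ` make sense. -/
theorem stmt16 (D : (Matrix (Fin 3) (Fin 3) ℂ)ˣ)
    (hD : (D : Matrix (Fin 3) (Fin 3) ℂ) = Matrix.diagonal ![1, -1, ζ]) :
    (∀ s t : ℤ,
      star (((D ^ s : (Matrix (Fin 3) (Fin 3) ℂ)ˣ) : Matrix (Fin 3) (Fin 3) ℂ).mulVec v₂) ⬝ᵥ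
        (((D ^ t : (Matrix (Fin 3) (Fin 3) ℂ)ˣ) : Matrix (Fin 3) (Fin 3) ℂ).mulVec v₂) =
        1 / 4 + (-1 : ℂ) ^ (t - s) / 4 + ζ ^ (t - s) / 2) ∧
    (∀ s t : ℤ, s % 6 ≠ t % 6 →
      ‖(star (((D ^ s : (Matrix (Fin 3) (Fin 3) ℂ)ˣ) : Matrix (Fin 3) (Fin 3) ℂ).mulVec v₂) ⬝ᵥ
          (((D ^ t : (Matrix (Fin 3) (Fin 3) ℂ)ˣ) : Matrix (Fin 3) (Fin 3) ℂ).mulVec v₂))‖ =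
        1 / 2) ∧
    (∀ t : Fin 6,
      star ((((D : Matrix (Fin 3) (Fin 3) ℂ)) ^ (t : ℕ)).mulVec v₂) ⬝ᵥ
        ((((D : Matrix (Fin 3) (Fin 3) ℂ)) ^ (t : ℕ)).mulVec v₂) = 1) ∧
    Function.Injective
      (fun t : Fin 6 => (((D : Matrix (Fin 3) (Fin 3) ℂ)) ^ (t : ℕ)).mulVec v₂) := by
  have gram (s t : ℤ) : star (((D ^ s : M₃ˣ) : M₃) *ᵥ v₂) ⬝ᵥ (((D ^ t : M₃ˣ) : M₃) *ᵥ v₂) =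
      1 / 4 + (-1 : ℂ) ^ (t - s) / 4 + ζ ^ (t - s) / 2 := by
    rw [val_zpow_of_val_eq_diagonal hD s, val_zpow_of_val_eq_diagonal hD t]
    exact star_diagonal_zpow_mulVec_v₂_dotProduct s t
  have norm_gram (s t : ℤ) (hst : s % 6 ≠ t % 6) :
      ‖star (((D ^ s : M₃ˣ) : M₃) *ᵥ v₂) ⬝ᵥ (((D ^ t : M₃ˣ) : M₃) *ᵥ v₂)‖ = 1 / 2 := by
    rw [gram]
    exact norm_one_fourth_add_neg_one_zpow_add_zeta_zpow (by omega)
  have val_pow (n : ℕ) : (D : M₃) ^ n = ((D ^ (n : ℤ) : M₃ˣ) : M₃) := by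
    rw [zpow_natCast, Units.val_pow_eq_pow_val]
  have gram_self (t : Fin 6) :
      star (((D : M₃) ^ (t : ℕ)) *ᵥ v₂) ⬝ᵥ (((D : M₃) ^ (t : ℕ)) *ᵥ v₂) = 1 := by
    rw [val_pow, gram, sub_self]
    norm_num
  refine ⟨gram, norm_gram, gram_self, fun a b hab => ?_⟩
  by_contra hab'
  have := norm_gram a b (by omega)
  simp only [← val_pow] at this
  rw [show (D : M₃) ^ (b : ℕ) *ᵥ v₂ = (D : M₃) ^ (a : ℕ) *ᵥ v₂ from hab.symm, gram_self] at this
  norm_num at this
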